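/- arXiv:2312.12769 — 2 statements merged into one kernel-verified Lean document; each statement's English description precedes it below -/
import Mathlib

section
/- Let ξ̂_1,…,ξ̂_N ∈ ℝ^n, x ∈ {0,1}^n, α ∈ (0,1], ε ≥ 0, and q ∈ [1,∞]. Set γ = N if α < 1/N and γ = 1/α if α ≥ 1/N. Then the supremum, over all perturbations (Δ_1,…,Δ_N) ∈ (ℝ^n)^N satisfying Σ_{i=1}^N ‖Δ_i‖_q ≤ Nε, of CVaR^α((ξ̂_1+Δ_1)ᵀx,…,(ξ̂_N+Δ_N)ᵀx) equals CVaR^α(ξ̂_1ᵀx,…,ξ̂_Nᵀx) + γ ε ‖x‖_{q'}. -/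
open scoped BigOperators ENNReal

/-- Conditional Value at Risk of the values `c 1, …, c N` at risk level `α`:
`CVaR^α(c) = inf_{t ∈ ℝ} ( t + (1/(α N)) Σ_i max(c i − t, 0) )`. -/
noncomputable def cvar (N : ℕ) (α : ℝ) (c : Fin N → ℝ) : ℝ :=
  ⨅ t : ℝ, (t + 1 / (α * N) * ∑ i, max (c i - t) 0)

/-- The `q`-norm on `ℝ^n`, for an exponent `q ∈ [1,∞]` (represented as `ℝ≥0∞`). -/
noncomputable def qnorm {n : ℕ} (q : ℝ≥0∞) (v : Fin n → ℝ) : ℝ :=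
  if q = ⊤ then ⨆ i, |v i| else (∑ i, |v i| ^ q.toReal) ^ (1 / q.toReal)

/-!
A perturbation `Δ` changes the cost of sample `i` by `dᵢ = Δᵢᵀx`, and Hölder's inequality gives
`∑ |dᵢ| ≤ Nε ‖x‖_{q'}`. Since CVaR is monotone and translation equivariant,
`CVaR(c + d) ≤ CVaR(c) + ∑ |dᵢ|`, while the Rockafellar–Uryasev formula gives
`CVaR(c + d) ≤ CVaR(c) + ∑ |dᵢ| / (αN)`. Both bounds are attained at once by spending the whole
budget on a sample of largest cost, in the direction that realises `‖x‖_{q'}` (for binary `x`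
a multiple of `x` itself). Hence `γ = N · min(1, 1/(αN))`.
-/

section CVaR

variable {N : ℕ} {α : ℝ}

/-- The Rockafellar–Uryasev function, whose infimum over `t` is `cvar N α c`. -/
noncomputable def cvarObjective (N : ℕ) (α : ℝ) (c : Fin N → ℝ) (t : ℝ) : ℝ :=
  t + 1 / (α * N) * ∑ i, max (c i - t) 0

lemma sum_sub_le_sum_max_sub (c : Fin N → ℝ) (t : ℝ) :
    ∑ i, c i - N * t ≤ ∑ i, max (c i - t) 0 := by
  calc ∑ i, c i - N * t = ∑ i, (c i - t) := by simp [Finset.sum_sub_distrib]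
    _ ≤ _ := Finset.sum_le_sum fun i _ => le_max_left _ _

lemma mean_le_cvarObjective (hN : 0 < N) (hα0 : 0 < α) (hα1 : α ≤ 1) (c : Fin N → ℝ)
    (t : ℝ) : (∑ i, c i) / N ≤ cvarObjective N α c t := by
  have hN0 : (0 : ℝ) < N := Nat.cast_pos.mpr hN
  calc (∑ i, c i) / N = t + 1 / N * (∑ i, c i - N * t) := by field_simp; ring
    _ ≤ t + 1 / N * ∑ i, max (c i - t) 0 := by
        gcongr; exact sum_sub_le_sum_max_sub c t
    _ ≤ cvarObjective N α c t := by
        unfold cvarObjective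
        gcongr
        exact mul_le_of_le_one_left hN0.le hα1

lemma bddBelow_range_cvarObjective (hN : 0 < N) (hα0 : 0 < α) (hα1 : α ≤ 1)
    (c : Fin N → ℝ) : BddBelow (Set.range (cvarObjective N α c)) :=
  ⟨_, Set.forall_mem_range.mpr (mean_le_cvarObjective hN hα0 hα1 c)⟩

lemma cvar_le_cvarObjective (hN : 0 < N) (hα0 : 0 < α) (hα1 : α ≤ 1) (c : Fin N → ℝ)
    (t : ℝ) : cvar N α c ≤ cvarObjective N α c t :=
  ciInf_le (bddBelow_range_cvarObjective hN hα0 hα1 c) t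

lemma le_cvar {c : Fin N → ℝ} {b : ℝ} (h : ∀ t, b ≤ cvarObjective N α c t) :
    b ≤ cvar N α c :=
  le_ciInf h

lemma cvar_le_of_forall_le (hN : 0 < N) (hα0 : 0 < α) (hα1 : α ≤ 1) {c : Fin N → ℝ}
    {b : ℝ} (hcb : ∀ i, c i ≤ b) : cvar N α c ≤ b := by
  have h := cvar_le_cvarObjective hN hα0 hα1 c b
  rwa [cvarObjective, Finset.sum_eq_zero fun i _ => max_eq_right (sub_nonpos.mpr (hcb i)),
    mul_zero, add_zero] at h

lemma cvar_mono (hN : 0 < N) (hα0 : 0 < α) (hα1 : α ≤ 1) {c c' : Fin N → ℝ}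
    (h : c ≤ c') : cvar N α c ≤ cvar N α c' :=
  le_cvar fun t => (cvar_le_cvarObjective hN hα0 hα1 c t).trans <| by
    unfold cvarObjective
    gcongr with i
    exact h i

lemma cvarObjective_add_const (c : Fin N → ℝ) (M t : ℝ) :
    cvarObjective N α (fun i => c i + M) (t + M) = cvarObjective N α c t + M := by
  simp only [cvarObjective, add_sub_add_right_eq_sub]
  ring

lemma cvar_add_const (hN : 0 < N) (hα0 : 0 < α) (hα1 : α ≤ 1) (c : Fin N → ℝ) (M : ℝ) :
    cvar N α (fun i => c i + M) = cvar N α c + M := by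
  apply le_antisymm
  · rw [← sub_le_iff_le_add]
    refine le_cvar fun t => sub_le_iff_le_add.mpr ?_
    rw [← cvarObjective_add_const]
    exact cvar_le_cvarObjective hN hα0 hα1 _ _
  · refine le_cvar fun t => ?_
    rw [← sub_add_cancel t M, cvarObjective_add_const]
    exact add_le_add_left (cvar_le_cvarObjective hN hα0 hα1 c _) M

lemma cvar_add_le_add_sum_abs (hN : 0 < N) (hα0 : 0 < α) (hα1 : α ≤ 1) (c d : Fin N → ℝ) :
    cvar N α (c + d) ≤ cvar N α c + ∑ i, |d i| := by
  rw [← cvar_add_const hN hα0 hα1]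
  refine cvar_mono hN hα0 hα1 fun i => add_le_add_right ?_ (c i)
  exact (le_abs_self (d i)).trans
    (Finset.single_le_sum (fun j _ => abs_nonneg (d j)) (Finset.mem_univ i))

lemma cvar_add_le_add_div_mul_sum_abs (hN : 0 < N) (hα0 : 0 < α) (hα1 : α ≤ 1)
    (c d : Fin N → ℝ) :
    cvar N α (c + d) ≤ cvar N α c + 1 / (α * N) * ∑ i, |d i| := by
  rw [← sub_le_iff_le_add]
  refine le_cvar fun t => sub_le_iff_le_add.mpr ?_
  calc cvar N α (c + d) ≤ cvarObjective N α (c + d) t := cvar_le_cvarObjective hN hα0 hα1 _ t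
    _ ≤ t + 1 / (α * N) * ∑ i, (max (c i - t) 0 + |d i|) := by
        unfold cvarObjective
        gcongr with i
        rw [Pi.add_apply, max_le_iff]
        constructor
        · linarith [le_max_left (c i - t) 0, le_abs_self (d i)]
        · positivity
    _ = cvarObjective N α c t + 1 / (α * N) * ∑ i, |d i| := by
        rw [Finset.sum_add_distrib, cvarObjective]
        ring

lemma cvar_add_le (hN : 0 < N) (hα0 : 0 < α) (hα1 : α ≤ 1) (c d : Fin N → ℝ) :
    cvar N α (c + d) ≤ cvar N α c + min 1 (1 / (α * N)) * ∑ i, |d i| := by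
  rw [min_mul_of_nonneg _ _ (Finset.sum_nonneg fun i _ => abs_nonneg (d i)), one_mul,
    ← min_add_add_left]
  exact le_min (cvar_add_le_add_sum_abs hN hα0 hα1 c d)
    (cvar_add_le_add_div_mul_sum_abs hN hα0 hα1 c d)

lemma add_min_one_mul_le_add_mul_max {b t s B : ℝ} (hbt : b ≤ t) (hB : 0 ≤ B) :
    b + min 1 s * B ≤ t + s * max (b + B - t) 0 := by
  rcases le_total (b + B - t) 0 with h | h
  · rw [max_eq_right h]
    nlinarith [min_le_left 1 s]
  · rw [max_eq_left h]
    rcases le_total 1 s with hs1 | hs1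
    · rw [min_eq_left hs1]; nlinarith
    · rw [min_eq_right hs1]; nlinarith

lemma cvar_add_single (hN : 0 < N) (hα0 : 0 < α) (hα1 : α ≤ 1) {c : Fin N → ℝ} {k : Fin N}
    (hk : ∀ i, c i ≤ c k) {B : ℝ} (hB : 0 ≤ B) :
    cvar N α (c + Pi.single k B) = cvar N α c + min 1 (1 / (α * N)) * B := by
  refine le_antisymm ?_ (le_cvar fun t => ?_)
  · have hsum : ∑ i, |Pi.single k B i| = B := by
      simp only [Pi.apply_single (fun _ => abs) (fun _ => abs_zero), Finset.sum_pi_single',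
        Finset.mem_univ, if_true, abs_of_nonneg hB]
    simpa only [hsum] using cvar_add_le hN hα0 hα1 c (Pi.single k B)
  rcases le_total t (c k) with htk | hkt
  · have hmax : ∀ i, max ((c + Pi.single k B : Fin N → ℝ) i - t) 0 =
        max (c i - t) 0 + (Pi.single k B : Fin N → ℝ) i := by
      intro i
      rcases eq_or_ne i k with rfl | hik
      · simp only [Pi.add_apply, Pi.single_eq_same]
        rw [max_eq_left (by linarith), max_eq_left (by linarith)]
        ring
      · simp [hik]
    have hobj : cvarObjective N α (c + Pi.single k B) t =
        cvarObjective N α c t + 1 / (α * N) * B := by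
      simp only [cvarObjective, hmax, Finset.sum_add_distrib, Finset.sum_pi_single',
        Finset.mem_univ, if_true]
      ring
    rw [hobj]
    gcongr
    · exact cvar_le_cvarObjective hN hα0 hα1 c t
    · exact min_le_right _ _
  · calc cvar N α c + min 1 (1 / (α * N)) * B
        ≤ c k + min 1 (1 / (α * N)) * B := by gcongr; exact cvar_le_of_forall_le hN hα0 hα1 hk
      _ ≤ t + 1 / (α * N) * max (c k + B - t) 0 := add_min_one_mul_le_add_mul_max hkt hB
      _ ≤ cvarObjective N α (c + Pi.single k B) t := by
        unfold cvarObjective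
        gcongr
        refine le_of_eq_of_le ?_ (Finset.single_le_sum (fun i _ => le_max_right _ _)
          (Finset.mem_univ k))
        simp

end CVaR

section QNorm

variable {n : ℕ}

lemma qnorm_eq_norm {q : ℝ≥0∞} (hq : q ≠ 0) (v : Fin n → ℝ) :
    qnorm q v = ‖WithLp.toLp q v‖ := by
  unfold qnorm
  split_ifs with htop
  · subst htop
    simp [PiLp.norm_eq_ciSup]
  · simp [PiLp.norm_eq_sum (ENNReal.toReal_pos hq htop)]

lemma qnorm_nonneg (q : ℝ≥0∞) (v : Fin n → ℝ) : 0 ≤ qnorm q v := by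
  unfold qnorm
  split_ifs
  · exact Real.iSup_nonneg fun i => abs_nonneg _
  · positivity

lemma qnorm_zero {q : ℝ≥0∞} (hq : q ≠ 0) : qnorm q (0 : Fin n → ℝ) = 0 := by
  unfold qnorm
  split_ifs with htop
  · simp
  · simp [(ENNReal.toReal_pos hq htop).ne']

lemma sum_abs_mul_le_qnorm_top_mul_qnorm_one (u v : Fin n → ℝ) :
    ∑ j, |u j| * |v j| ≤ qnorm ⊤ u * qnorm 1 v := by
  have hu : ∀ j, |u j| ≤ qnorm ⊤ u := fun j =>
    le_ciSup (f := fun i => |u i|) (Set.finite_range _).bddAbove j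
  calc ∑ j, |u j| * |v j| ≤ ∑ j, qnorm ⊤ u * |v j| := by gcongr with j; exact hu j
    _ = qnorm ⊤ u * qnorm 1 v := by simp [qnorm, Finset.mul_sum]

lemma abs_sum_mul_le_qnorm_mul_qnorm (q q' : ℝ≥0∞) [q.HolderConjugate q'] (u v : Fin n → ℝ) :
    |∑ j, u j * v j| ≤ qnorm q u * qnorm q' v := by
  refine (Finset.abs_sum_le_sum_abs _ _).trans ?_
  simp only [abs_mul]
  rcases eq_or_ne q ⊤ with rfl | hq
  · obtain rfl : q' = 1 := (ENNReal.HolderConjugate.eq_top_iff_eq_one ⊤ q').mp rfl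
    exact sum_abs_mul_le_qnorm_top_mul_qnorm_one u v
  rcases eq_or_ne q' ⊤ with rfl | hq'
  · obtain rfl : q = 1 := (ENNReal.HolderConjugate.eq_top_iff_eq_one ⊤ q).mp rfl
    simpa only [mul_comm] using sum_abs_mul_le_qnorm_top_mul_qnorm_one v u
  simpa only [qnorm, hq, hq', if_false, abs_abs] using Real.inner_le_Lp_mul_Lq_of_nonneg
    Finset.univ (ENNReal.HolderConjugate.toReal_of_ne_top hq hq')
    (fun j _ => abs_nonneg (u j)) (fun j _ => abs_nonneg (v j))

lemma qnorm_of_binary {q : ℝ≥0∞} (hq : q ≠ 0) {x : Fin n → ℝ} (hx : ∀ j, x j = 0 ∨ x j = 1)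
    (hm : 0 < ∑ j, x j) : qnorm q x = (∑ j, x j) ^ (q⁻¹).toReal := by
  unfold qnorm
  split_ifs with htop
  · obtain ⟨j₀, hj₀⟩ : ∃ j, x j = 1 := by
      by_contra! h
      simp [fun j => (hx j).resolve_right (h j)] at hm
    have : Nonempty (Fin n) := ⟨j₀⟩
    subst htop
    refine le_antisymm (ciSup_le fun j => ?_) ?_
    · rcases hx j with h | h <;> simp [h]
    · simpa [hj₀] using le_ciSup (f := fun i => |x i|) (Set.finite_range _).bddAbove j₀
  · have hp : 0 < q.toReal := ENNReal.toReal_pos hq htop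
    have hpow : ∀ j, |x j| ^ q.toReal = x j := fun j => by
      rcases hx j with h | h <;> simp [h, hp.ne']
    simp only [hpow, ENNReal.toReal_inv, one_div]

lemma exists_qnorm_le_and_sum_mul_eq (q q' : ℝ≥0∞) [q.HolderConjugate q'] {x : Fin n → ℝ}
    (hx : ∀ j, x j = 0 ∨ x j = 1) {r : ℝ} (hr : 0 ≤ r) :
    ∃ w : Fin n → ℝ, qnorm q w ≤ r ∧ ∑ j, w j * x j = r * qnorm q' x := by
  have : Fact (1 ≤ q) := ⟨ENNReal.HolderConjugate.one_le q q'⟩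
  have hq := ENNReal.HolderConjugate.ne_zero q q'
  have hq' := ENNReal.HolderConjugate.ne_zero q' q
  have hx0 : ∀ j, 0 ≤ x j := fun j => by rcases hx j with h | h <;> simp [h]
  set m := ∑ j, x j
  rcases (Finset.sum_nonneg fun j _ => hx0 j : 0 ≤ m).eq_or_lt with hm | hm
  · have hxz : x = 0 := funext fun j => (Finset.sum_eq_zero_iff_of_nonneg fun j _ => hx0 j).mp
      hm.symm j (Finset.mem_univ j)
    refine ⟨0, ?_, ?_⟩
    · simpa [qnorm_zero hq] using hr
    · simp [hxz, qnorm_zero hq']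
  have hsum : (q⁻¹).toReal + (q'⁻¹).toReal = 1 := by
    rw [← ENNReal.toReal_add (ENNReal.inv_ne_top.mpr hq) (ENNReal.inv_ne_top.mpr hq'),
      ENNReal.HolderConjugate.inv_add_inv_eq_one, ENNReal.toReal_one]
  refine ⟨(r * m ^ (-(q⁻¹).toReal)) • x, le_of_eq ?_, ?_⟩
  · rw [qnorm_eq_norm hq, WithLp.toLp_smul, norm_smul, ← qnorm_eq_norm hq,
      qnorm_of_binary hq hx hm, Real.norm_of_nonneg (by positivity), mul_assoc,
      ← Real.rpow_add hm, neg_add_cancel, Real.rpow_zero, mul_one]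
  · have hxx : ∀ j, x j * x j = x j := fun j => by rcases hx j with h | h <;> simp [h]
    simp only [Pi.smul_apply, smul_eq_mul, mul_assoc, hxx, ← Finset.mul_sum]
    rw [qnorm_of_binary hq' hx hm, ← Real.rpow_add_one hm.ne', ← hsum]
    ring_nf

lemma sum_abs_sum_mul_le {N : ℕ} (q q' : ℝ≥0∞) [q.HolderConjugate q'] (Δ : Fin N → Fin n → ℝ)
    (x : Fin n → ℝ) : ∑ i, |∑ j, Δ i j * x j| ≤ (∑ i, qnorm q (Δ i)) * qnorm q' x := by
  rw [Finset.sum_mul]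
  exact Finset.sum_le_sum fun i _ => abs_sum_mul_le_qnorm_mul_qnorm q q' (Δ i) x

lemma exists_sum_qnorm_le_and_sum_mul_eq_single {N : ℕ} (q q' : ℝ≥0∞) [q.HolderConjugate q']
    {x : Fin n → ℝ} (hx : ∀ j, x j = 0 ∨ x j = 1) {r : ℝ} (hr : 0 ≤ r) (k : Fin N) :
    ∃ Δ : Fin N → Fin n → ℝ, ∑ i, qnorm q (Δ i) ≤ r ∧
      (fun i => ∑ j, Δ i j * x j) = Pi.single k (r * qnorm q' x) := by
  obtain ⟨w, hw, hwx⟩ := exists_qnorm_le_and_sum_mul_eq q q' hx hr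
  refine ⟨Pi.single k w, ?_, ?_⟩
  · have hq0 := qnorm_zero (n := n) (ENNReal.HolderConjugate.ne_zero q q')
    simpa only [Pi.apply_single (fun _ => qnorm q) (fun _ => hq0), Finset.sum_pi_single',
      Finset.mem_univ, if_true] using hw
  · funext i
    rw [← hwx]
    exact Pi.apply_single (fun _ (v : Fin n → ℝ) => ∑ j, v j * x j) (fun _ => by simp) k w i

end QNorm

lemma ite_eq_min_one_mul {M α : ℝ} (hM : 0 < M) (hα : 0 < α) :
    (if α < 1 / M then M else 1 / α) = min 1 (1 / (α * M)) * M := by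
  split_ifs with h
  · rw [min_eq_left, one_mul]
    rw [lt_div_iff₀ hM] at h
    rw [le_div_iff₀ (by positivity)]
    linarith
  · rw [min_eq_right]
    · field_simp
    · rw [not_lt, div_le_iff₀ hM] at h
      rw [div_le_iff₀ (by positivity)]
      linarith

theorem stmt_7_general (n N : ℕ) (hN : 0 < N)
    (ξ : Fin N → Fin n → ℝ) (x : Fin n → ℝ) (hx : ∀ j, x j = 0 ∨ x j = 1)
    (α : ℝ) (hα0 : 0 < α) (hα1 : α ≤ 1) (ε : ℝ) (hε : 0 ≤ ε)
    (q q' : ℝ≥0∞) (hdual : 1 / q + 1 / q' = 1) :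
    sSup {y : ℝ | ∃ Δ : Fin N → Fin n → ℝ,
        (∑ i, qnorm q (Δ i)) ≤ N * ε ∧
        y = cvar N α (fun i => ∑ j, (ξ i j + Δ i j) * x j)} =
      cvar N α (fun i => ∑ j, ξ i j * x j) +
        (if α < 1 / (N : ℝ) then (N : ℝ) else 1 / α) * ε * qnorm q' x := by
  have : q.HolderConjugate q' :=
    ENNReal.holderConjugate_iff.mpr (by simpa only [one_div] using hdual)
  set c : Fin N → ℝ := fun i => ∑ j, ξ i j * x j
  set K := qnorm q' x
  have hK : 0 ≤ K := qnorm_nonneg q' x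
  have hN0 : (0 : ℝ) < N := Nat.cast_pos.mpr hN
  have hperturb : ∀ Δ : Fin N → Fin n → ℝ,
      (fun i => ∑ j, (ξ i j + Δ i j) * x j) = c + fun i => ∑ j, Δ i j * x j := fun Δ =>
    funext fun i => by simp only [add_mul, Finset.sum_add_distrib, Pi.add_apply, c]
  have hγ : (if α < 1 / (N : ℝ) then (N : ℝ) else 1 / α) * ε * K
      = min 1 (1 / (α * N)) * (N * ε * K) := by
    rw [ite_eq_min_one_mul hN0 hα0]
    ring
  have : Nonempty (Fin N) := ⟨⟨0, hN⟩⟩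
  obtain ⟨k, hk⟩ := Finite.exists_max c
  obtain ⟨Δ₀, hΔ₀, hΔ₀x⟩ :=
    exists_sum_qnorm_le_and_sum_mul_eq_single q q' hx (by positivity : (0 : ℝ) ≤ N * ε) k
  rw [hγ]
  refine IsGreatest.csSup_eq ⟨⟨Δ₀, hΔ₀, ?_⟩, ?_⟩
  · rw [hperturb, hΔ₀x, cvar_add_single hN hα0 hα1 hk (by positivity)]
  · rintro y ⟨Δ, hΔ, rfl⟩
    rw [hperturb]
    refine (cvar_add_le hN hα0 hα1 c _).trans ?_
    gcongr
    exact (sum_abs_sum_mul_le q q' Δ x).trans (by gcongr)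

/-- For a binary vector `x`, the supremum over all perturbations `(Δ_1,…,Δ_N)` with
`Σ_i ‖Δ_i‖_q ≤ Nε` of `CVaR^α((ξ̂_1+Δ_1)ᵀx,…,(ξ̂_N+Δ_N)ᵀx)` equals
`CVaR^α(ξ̂_1ᵀx,…,ξ̂_Nᵀx) + γ ε ‖x‖_{q'}`, where `γ = N` if `α < 1/N` and `γ = 1/α`
otherwise, and `q'` is the dual exponent of `q`. -/
theorem stmt_7 (n N : ℕ) (hN : 0 < N)
    (ξ : Fin N → Fin n → ℝ) (x : Fin n → ℝ) (hx : ∀ j, x j = 0 ∨ x j = 1)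
    (α : ℝ) (hα0 : 0 < α) (hα1 : α ≤ 1) (ε : ℝ) (hε : 0 ≤ ε)
    (q q' : ℝ≥0∞) (hq : 1 ≤ q) (hdual : 1 / q + 1 / q' = 1) :
    sSup {y : ℝ | ∃ Δ : Fin N → Fin n → ℝ,
        (∑ i, qnorm q (Δ i)) ≤ N * ε ∧
        y = cvar N α (fun i => ∑ j, (ξ i j + Δ i j) * x j)} =
      cvar N α (fun i => ∑ j, ξ i j * x j) +
        (if α < 1 / (N : ℝ) then (N : ℝ) else 1 / α) * ε * qnorm q' x :=
  stmt_7_general n N hN ξ x hx α hα0 hα1 ε hε q q' hdual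
end

section
/- Let b ∈ ℝ^n_+ and let Ξ_{0,b} = {ξ ∈ ℝ^n : 0 ≤ ξ ≤ b componentwise}. Let ξ̂_1,…,ξ̂_N ∈ Ξ_{0,b}, let l ∈ {1,…,N}, α = l/N, ε ≥ 0, and q = 1. Then for each x ∈ {0,1}^n, the maximum over all (ξ_1,…,ξ_N) ∈ (Ξ_{0,b})^N satisfying Σ_{i=1}^N ‖ξ_i − ξ̂_i‖_1 ≤ Nε of CVaR^α(ξ_1ᵀx,…,ξ_Nᵀx) equals min{ bᵀx , CVaR^α(ξ̂_1ᵀx,…,ξ̂_Nᵀx) + Nε/l }. -/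
open scoped BigOperators ENNReal

/-!
When `α N = l` is an integer, `CVaR^α(c)` is the mean of the `l` largest values of `c`, and it
is `1/l`-Lipschitz for the `ℓ¹` norm. The `ℓ¹` budget `Nε` therefore raises the CVaR of the
values `ξ_iᵀx` by at most `Nε/l`, and no `ξ_iᵀx` can exceed `bᵀx`. Both bounds are attained
at once by moving the `l` largest scenarios a common fraction `σ = min(1, Nε/H)` of the way
towards `b` on the support of `x`, where `H` is the total distance of those scenarios from `b`.
-/

open Finset

section CVaR

variable {N l : ℕ} {α : ℝ}

lemma sum_div_card_le_cvar_objective (hl : 0 < l) (hα : α * N = l) (c : Fin N → ℝ)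
    {T : Finset (Fin N)} (hT : #T = l) (t : ℝ) :
    (∑ i ∈ T, c i) / l ≤ t + 1 / (α * N) * ∑ i, max (c i - t) 0 := by
  have hl' : (0 : ℝ) < l := by exact_mod_cast hl
  have hT_le : ∑ i ∈ T, (c i - t) ≤ ∑ i, max (c i - t) 0 :=
    (sum_le_sum fun i _ => le_max_left _ _).trans
      (sum_le_sum_of_subset_of_nonneg (subset_univ T) fun i _ _ => le_max_right _ _)
  rw [sum_sub_distrib, sum_const, hT, nsmul_eq_mul] at hT_le
  calc (∑ i ∈ T, c i) / l = t + 1 / l * ((∑ i ∈ T, c i) - l * t) := by field_simp; ring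
    _ ≤ t + 1 / (α * N) * ∑ i, max (c i - t) 0 := by rw [hα]; gcongr

lemma le_cvar_s9 (hl : 0 < l) (hα : α * N = l) (c : Fin N → ℝ) {T : Finset (Fin N)}
    (hT : #T = l) : (∑ i ∈ T, c i) / l ≤ cvar N α c :=
  le_ciInf (sum_div_card_le_cvar_objective hl hα c hT)

lemma cvar_le_objective (hl : 0 < l) (hlN : l ≤ N) (hα : α * N = l) (c : Fin N → ℝ) (t : ℝ) :
    cvar N α c ≤ t + 1 / (α * N) * ∑ i, max (c i - t) 0 := by
  obtain ⟨T, -, hT⟩ := exists_subset_card_eq (s := (univ : Finset (Fin N))) (by simpa using hlN)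
  exact ciInf_le ⟨_, Set.forall_mem_range.2 (sum_div_card_le_cvar_objective hl hα c hT)⟩ t

lemma cvar_le_of_forall_le_s9 (hl : 0 < l) (hlN : l ≤ N) (hα : α * N = l) {c : Fin N → ℝ} {m : ℝ}
    (hcm : ∀ i, c i ≤ m) : cvar N α c ≤ m := by
  have hpos : ∑ i, max (c i - m) 0 = 0 :=
    sum_eq_zero fun i _ => max_eq_right (sub_nonpos.2 (hcm i))
  simpa [hpos] using cvar_le_objective hl hlN hα c m

lemma cvar_eq_sum_div_of_top (hl : 0 < l) (hα : α * N = l) (c : Fin N → ℝ)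
    {T : Finset (Fin N)} (hT : #T = l) (htop : ∀ i ∈ T, ∀ k ∉ T, c k ≤ c i) :
    cvar N α c = (∑ i ∈ T, c i) / l := by
  have hlN : l ≤ N := by simpa [hT] using card_le_univ T
  have hne : T.Nonempty := card_pos.1 (hT ▸ hl)
  refine le_antisymm ?_ (le_cvar_s9 hl hα c hT)
  -- at `t = min_T c` the positive parts vanish off `T` and are exact on `T`
  set t := T.inf' hne c
  have hsum : ∑ i, max (c i - t) 0 = ∑ i ∈ T, (c i - t) := by
    rw [← sum_subset (subset_univ T) fun i _ hi =>
      max_eq_right (sub_nonpos.2 (le_inf' hne c fun k hk => htop k hk i hi))]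
    exact sum_congr rfl fun i hi => max_eq_left (sub_nonneg.2 (inf'_le c hi))
  calc cvar N α c ≤ t + 1 / (α * N) * ∑ i, max (c i - t) 0 := cvar_le_objective hl hlN hα c t
    _ = (∑ i ∈ T, c i) / l := by
      rw [hsum, hα, sum_sub_distrib, sum_const, hT, nsmul_eq_mul]
      have : (l : ℝ) ≠ 0 := by exact_mod_cast hl.ne'
      field_simp
      ring

lemma cvar_le_add_sum_abs_sub_div (hl : 0 < l) (hlN : l ≤ N) (hα : α * N = l)
    (c d : Fin N → ℝ) : cvar N α c ≤ cvar N α d + (∑ i, |c i - d i|) / l := by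
  rw [← sub_le_iff_le_add]
  refine le_ciInf fun t => ?_
  have hmax : ∑ i, max (c i - t) 0 ≤ ∑ i, max (d i - t) 0 + ∑ i, |c i - d i| := by
    rw [← sum_add_distrib]
    refine sum_le_sum fun i _ => max_le ?_ (by positivity)
    linarith [le_abs_self (c i - d i), le_max_left (d i - t) 0]
  calc cvar N α c - (∑ i, |c i - d i|) / l
      ≤ t + 1 / l * ∑ i, max (c i - t) 0 - (∑ i, |c i - d i|) / l := by
        gcongr; simpa [hα] using cvar_le_objective hl hlN hα c t
    _ ≤ t + 1 / l * (∑ i, max (d i - t) 0 + ∑ i, |c i - d i|) - (∑ i, |c i - d i|) / l := by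
        gcongr
    _ = t + 1 / (α * N) * ∑ i, max (d i - t) 0 := by rw [hα]; ring

lemma exists_top_card_eq (hlN : l ≤ N) (c : Fin N → ℝ) :
    ∃ T : Finset (Fin N), #T = l ∧ ∀ i ∈ T, ∀ k ∉ T, c k ≤ c i := by
  induction l with
  | zero => exact ⟨∅, rfl, by simp⟩
  | succ m ih =>
    obtain ⟨T, hTcard, hTtop⟩ := ih (Nat.le_of_succ_le hlN)
    have hTne : Tᶜ.Nonempty := by
      rw [← card_pos, card_compl, hTcard, Fintype.card_fin]
      omega
    obtain ⟨j, hj, hjmax⟩ := Tᶜ.exists_max_image c hTne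
    refine ⟨insert j T, by rw [card_insert_of_notMem (mem_compl.1 hj), hTcard], ?_⟩
    intro i hi k hk
    rw [mem_insert, not_or] at hk
    rcases mem_insert.1 hi with rfl | hiT
    · exact hjmax k (mem_compl.2 hk.2)
    · exact hTtop i hiT k hk.2

-- `H = 0` is included: there `B / H = 0`.
lemma min_one_div_mul_eq_min {H B : ℝ} (hH : 0 ≤ H) (hB : 0 ≤ B) :
    min 1 (B / H) * H = min H B := by
  rcases hH.eq_or_lt with rfl | hH
  · simp [hB]
  · rw [min_mul_of_nonneg _ _ hH.le, one_mul, div_mul_cancel₀ _ hH.ne']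

lemma exists_cvar_eq_min (hl : 0 < l) (hlN : l ≤ N) (hα : α * N = l) {c : Fin N → ℝ}
    {m B : ℝ} (hcm : ∀ i, c i ≤ m) (hB : 0 ≤ B) :
    ∃ s : Fin N → ℝ, (∀ i, 0 ≤ s i ∧ s i ≤ 1) ∧ ∑ i, s i * (m - c i) ≤ B ∧
      cvar N α (fun i => c i + s i * (m - c i)) = min m (cvar N α c + B / l) := by
  obtain ⟨T, hT, htop⟩ := exists_top_card_eq hlN c
  set H := ∑ i ∈ T, (m - c i)
  have hH : 0 ≤ H := sum_nonneg fun i _ => sub_nonneg.2 (hcm i)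
  set σ := min 1 (B / H)
  have hσ : 0 ≤ σ ∧ σ ≤ 1 := ⟨le_min zero_le_one (div_nonneg hB hH), min_le_left _ _⟩
  set s : Fin N → ℝ := fun i => if i ∈ T then σ else 0
  have hgain : ∑ i ∈ T, s i * (m - c i) = min H B := by
    rw [sum_congr rfl fun i hi => by rw [show s i = σ from if_pos hi], ← mul_sum,
      min_one_div_mul_eq_min hH hB]
  have hcost : ∑ i, s i * (m - c i) = min H B := by
    rw [← hgain, sum_subset (subset_univ T) fun i _ hi => by simp [s, hi]]
  refine ⟨s, fun i => ?_, hcost.trans_le (min_le_right _ _), ?_⟩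
  · by_cases hi : i ∈ T <;> simp [s, hi, hσ]
  have htop' : ∀ i ∈ T, ∀ k ∉ T, c k + s k * (m - c k) ≤ c i + s i * (m - c i) :=
    fun i hi k hk => by
      simp only [s, if_pos hi, if_neg hk, zero_mul, add_zero]
      nlinarith [htop i hi k hk, hcm i]
  have hm : m = (∑ i ∈ T, c i + H) / l := by
    simp only [H]
    rw [sum_sub_distrib, sum_const, hT, nsmul_eq_mul, add_sub_cancel,
      mul_div_cancel_left₀ _ (by exact_mod_cast hl.ne')]
  rw [cvar_eq_sum_div_of_top hl hα _ hT htop', cvar_eq_sum_div_of_top hl hα c hT htop,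
    sum_add_distrib, hgain, hm, ← add_div, min_div_div_right l.cast_nonneg, min_add_add_left]

end CVaR

section Box

variable {ι : Type*}

def pushToward (b x : ι → ℝ) (s : ℝ) (v : ι → ℝ) : ι → ℝ :=
  fun j => v j + s * x j * (b j - v j)

lemma pushToward_mem_Icc {b x v : ι → ℝ} {s : ℝ} (hs : s ∈ Set.Icc 0 1) (j : ι)
    (hx : x j ∈ Set.Icc 0 1) (hv : v j ∈ Set.Icc 0 (b j)) :
    pushToward b x s v j ∈ Set.Icc 0 (b j) := by
  have hsx : 0 ≤ s * x j ∧ s * x j ≤ 1 := ⟨mul_nonneg hs.1 hx.1, mul_le_one₀ hs.2 hx.1 hx.2⟩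
  constructor <;> unfold pushToward <;> nlinarith [hv.1, hv.2]

variable [Fintype ι]

lemma sum_abs_pushToward_sub {b x v : ι → ℝ} {s : ℝ} (hs : 0 ≤ s) (hx : ∀ j, 0 ≤ x j)
    (hv : ∀ j, v j ≤ b j) :
    ∑ j, |pushToward b x s v j - v j| = s * (∑ j, b j * x j - ∑ j, v j * x j) := by
  rw [← sum_sub_distrib, mul_sum]
  refine sum_congr rfl fun j _ => ?_
  rw [pushToward, add_sub_cancel_left,
    abs_of_nonneg (mul_nonneg (mul_nonneg hs (hx j)) (sub_nonneg.2 (hv j)))]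
  ring

lemma sum_pushToward_mul {b x v : ι → ℝ} (s : ℝ) (hx : ∀ j, x j = 0 ∨ x j = 1) :
    ∑ j, pushToward b x s v j * x j
      = ∑ j, v j * x j + s * (∑ j, b j * x j - ∑ j, v j * x j) := by
  rw [← sum_sub_distrib, mul_sum, ← sum_add_distrib]
  refine sum_congr rfl fun j _ => ?_
  rcases hx j with h | h <;> simp only [pushToward, h] <;> ring

lemma sum_mul_le_sum_mul_of_le {v b x : ι → ℝ} (hv : ∀ j, v j ≤ b j) (hx : ∀ j, 0 ≤ x j) :
    ∑ j, v j * x j ≤ ∑ j, b j * x j :=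
  sum_le_sum fun j _ => mul_le_mul_of_nonneg_right (hv j) (hx j)

lemma abs_sum_mul_sub_sum_mul_le {v w x : ι → ℝ} (hx : ∀ j, |x j| ≤ 1) :
    |∑ j, v j * x j - ∑ j, w j * x j| ≤ ∑ j, |v j - w j| := by
  rw [← sum_sub_distrib]
  refine (abs_sum_le_sum_abs _ _).trans (sum_le_sum fun j _ => ?_)
  rw [← sub_mul, abs_mul]
  exact mul_le_of_le_one_right (abs_nonneg _) (hx j)

end Box

theorem stmt_9_general (n N : ℕ) (hN : 0 < N) (b : Fin n → ℝ)
    (ξh : Fin N → Fin n → ℝ) (hξh : ∀ i j, 0 ≤ ξh i j ∧ ξh i j ≤ b j)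
    (l : ℕ) (hl1 : 1 ≤ l) (hlN : l ≤ N) (ε : ℝ) (hε : 0 ≤ ε)
    (x : Fin n → ℝ) (hx : ∀ j, x j = 0 ∨ x j = 1) :
    IsGreatest {y : ℝ | ∃ ξ : Fin N → Fin n → ℝ,
        (∀ i j, 0 ≤ ξ i j ∧ ξ i j ≤ b j) ∧
        (∑ i, ∑ j, |ξ i j - ξh i j|) ≤ N * ε ∧
        y = cvar N ((l : ℝ) / N) (fun i => ∑ j, ξ i j * x j)}
      (min (∑ j, b j * x j)
        (cvar N ((l : ℝ) / N) (fun i => ∑ j, ξh i j * x j) + N * ε / l)) := by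
  have hα : (l / N : ℝ) * N = l := div_mul_cancel₀ _ (by positivity)
  have hx01 : ∀ j, 0 ≤ x j ∧ x j ≤ 1 := fun j => by rcases hx j with h | h <;> simp [h]
  have hx0 : ∀ j, 0 ≤ x j := fun j => (hx01 j).1
  constructor
  · obtain ⟨s, hs, hcost, hval⟩ := exists_cvar_eq_min hl1 hlN hα
      (fun i => sum_mul_le_sum_mul_of_le (fun j => (hξh i j).2) hx0) (by positivity : 0 ≤ N * ε)
    refine ⟨fun i => pushToward b x (s i) (ξh i),
      fun i j => pushToward_mem_Icc (hs i) j (hx01 j) (hξh i j), ?_, ?_⟩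
    · simpa only [sum_abs_pushToward_sub (hs _).1 hx0 fun j => (hξh _ j).2] using hcost
    · simpa only [sum_pushToward_mul _ hx] using hval.symm
  · rintro y ⟨ξ, hξ, hcost, rfl⟩
    refine le_min (cvar_le_of_forall_le_s9 hl1 hlN hα fun i =>
      sum_mul_le_sum_mul_of_le (fun j => (hξ i j).2) hx0) ?_
    have hdist : ∑ i, |∑ j, ξ i j * x j - ∑ j, ξh i j * x j| ≤ N * ε :=
      (sum_le_sum fun i _ => abs_sum_mul_sub_sum_mul_le fun j => by
        rcases hx j with h | h <;> simp [h]).trans hcost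
    calc _ ≤ _ := cvar_le_add_sum_abs_sub_div hl1 hlN hα _ (fun i => ∑ j, ξh i j * x j)
      _ ≤ _ := by gcongr

/-- For the box support set `Ξ_{0,b} = {ξ : 0 ≤ ξ ≤ b}`, sample points `ξ̂_i ∈ Ξ_{0,b}`,
`α = l/N` and `q = 1`: for each binary `x`, the maximum of `CVaR^α(ξ_1ᵀx,…,ξ_Nᵀx)` over
the ambiguity set `{(ξ_1,…,ξ_N) ∈ Ξ_{0,b}^N : Σ_i ‖ξ_i − ξ̂_i‖_1 ≤ Nε}` equals
`min{ bᵀx , CVaR^α(ξ̂_1ᵀx,…,ξ̂_Nᵀx) + Nε/l }`. -/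
theorem stmt_9 (n N : ℕ) (hN : 0 < N) (b : Fin n → ℝ) (hb : ∀ j, 0 ≤ b j)
    (ξh : Fin N → Fin n → ℝ) (hξh : ∀ i j, 0 ≤ ξh i j ∧ ξh i j ≤ b j)
    (l : ℕ) (hl1 : 1 ≤ l) (hlN : l ≤ N) (ε : ℝ) (hε : 0 ≤ ε)
    (x : Fin n → ℝ) (hx : ∀ j, x j = 0 ∨ x j = 1) :
    IsGreatest {y : ℝ | ∃ ξ : Fin N → Fin n → ℝ,
        (∀ i j, 0 ≤ ξ i j ∧ ξ i j ≤ b j) ∧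
        (∑ i, ∑ j, |ξ i j - ξh i j|) ≤ N * ε ∧
        y = cvar N ((l : ℝ) / N) (fun i => ∑ j, ξ i j * x j)}
      (min (∑ j, b j * x j)
        (cvar N ((l : ℝ) / N) (fun i => ∑ j, ξh i j * x j) + N * ε / l)) :=
  stmt_9_general n N hN b ξh hξh l hl1 hlN ε hε x hx
end
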